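/- arXiv:2111.06778 — 4 statements merged into one kernel-verified Lean document; each statement's English description precedes it below -/
import Mathlib

section
/- Let m ≥ 2 be an integer, let (p_k)_{k≥0} ⊂ [0,1) satisfy ∑_{k=0}^∞ p_k < ∞, and let C₁, C₂ ∈ ℝ. Then there exists a pair of functions u, v : T_m → ℝ solving the directed system (ED1) and satisfying the boundary condition (ED2) with f ≡ C₁ and g ≡ C₂; moreover u and v can be taken to be constant on each level of the tree (u(x) = a_k and v(x) = b_k for every vertex x of level k, where the sequences (a_k), (b_k) satisfy a_k = (1−p_k)a_{k+1} + p_k b_k and b_k = (1−p_k)b_{k+1} + p_k a_k for all k ≥ 0, with a_k → C₁ and b_k → C₂). -/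
/-!
Adding the two recurrences shows that `a_k + b_k` is constant, while the difference
`d_k = a_k - b_k` must satisfy `(1 - p_k) d_{k+1} = (1 + p_k) d_k`. Since `∑ p_k < ∞`, the
logarithms of the ratios `(1 + p_k) / (1 - p_k)` are summable, so
`d_k = (C₁ - C₂) exp (-∑_{j ≥ k} log ((1 + p_j) / (1 - p_j)))` solves this recurrence and tends
to `C₁ - C₂`. On functions that are constant on levels, the maximum, minimum and average over
the successors all equal the value on the next level, so (ED1) reduces to the recurrences and
(ED2) to the limits of `a_k` and `b_k`.
-/

open Filter Topology

noncomputable section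

/-- The level-`n` truncation of a branch `π` of the `m`-regular tree. -/
def trunc {m : ℕ} (π : ℕ → Fin m) (n : ℕ) : List (Fin m) :=
  List.ofFn (fun i : Fin n => π i)

/-- `ψ(π) = ∑_{k≥1} a_k m^{-k}` for a branch `π = (a_1, a_2, …)`. -/
def psi (m : ℕ) (π : ℕ → Fin m) : ℝ :=
  ∑' k : ℕ, (π k : ℝ) / (m : ℝ) ^ (k + 1)

/-- Maximum of `u` over the successors of the vertex `x`. -/
def treeMax (m : ℕ) (u : List (Fin m) → ℝ) (x : List (Fin m)) : ℝ :=
  ⨆ i : Fin m, u (x ++ [i])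

/-- Minimum of `u` over the successors of the vertex `x`. -/
def treeMin (m : ℕ) (u : List (Fin m) → ℝ) (x : List (Fin m)) : ℝ :=
  ⨅ i : Fin m, u (x ++ [i])

/-- Average of `v` over the successors of the vertex `x`. -/
def treeAvg (m : ℕ) (v : List (Fin m) → ℝ) (x : List (Fin m)) : ℝ :=
  (1 / (m : ℝ)) * ∑ i : Fin m, v (x ++ [i])

/-- The pair `(u, v)` solves the directed system (ED1). -/
def SolED1 (m : ℕ) (p : ℕ → ℝ) (u v : List (Fin m) → ℝ) : Prop :=
  ∀ x : List (Fin m),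
    u x = (1 - p x.length) * ((1 / 2) * treeMax m u x + (1 / 2) * treeMin m u x)
          + p x.length * v x ∧
    v x = (1 - p x.length) * treeAvg m v x + p x.length * u x

/-- The pair `(u, v)` satisfies the boundary condition (ED2). -/
def BoundaryED2 (m : ℕ) (f g : ℝ → ℝ) (u v : List (Fin m) → ℝ) : Prop :=
  ∀ π : ℕ → Fin m,
    Tendsto (fun n => u (trunc π n)) atTop (𝓝 (f (psi m π))) ∧
    Tendsto (fun n => v (trunc π n)) atTop (𝓝 (g (psi m π)))

/-- `(z, w)` is a subsolution of (ED1)–(ED2). -/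
def SubsolED1 (m : ℕ) (p : ℕ → ℝ) (f g : ℝ → ℝ) (z w : List (Fin m) → ℝ) : Prop :=
  (∀ x : List (Fin m),
    z x ≤ (1 - p x.length) * ((1 / 2) * treeMax m z x + (1 / 2) * treeMin m z x)
          + p x.length * w x ∧
    w x ≤ (1 - p x.length) * treeAvg m w x + p x.length * z x) ∧
  ∀ π : ℕ → Fin m,
    limsup (fun n => z (trunc π n)) atTop ≤ f (psi m π) ∧
    limsup (fun n => w (trunc π n)) atTop ≤ g (psi m π)

/-- `(z, w)` is a supersolution of (ED1)–(ED2). -/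
def SupersolED1 (m : ℕ) (p : ℕ → ℝ) (f g : ℝ → ℝ) (z w : List (Fin m) → ℝ) : Prop :=
  (∀ x : List (Fin m),
    z x ≥ (1 - p x.length) * ((1 / 2) * treeMax m z x + (1 / 2) * treeMin m z x)
          + p x.length * w x ∧
    w x ≥ (1 - p x.length) * treeAvg m w x + p x.length * z x) ∧
  ∀ π : ℕ → Fin m,
    f (psi m π) ≤ liminf (fun n => z (trunc π n)) atTop ∧
    g (psi m π) ≤ liminf (fun n => w (trunc π n)) atTop

theorem exists_mul_succ_eq_tendsto {r : ℕ → ℝ} (hr : ∀ k, 0 < r k)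
    (hlog : Summable fun k => Real.log (r k)) (c : ℝ) :
    ∃ d : ℕ → ℝ, (∀ k, d (k + 1) = r k * d k) ∧ Tendsto d atTop (𝓝 c) := by
  set T : ℕ → ℝ := fun k => ∑' j, Real.log (r (j + k))
  have hT : ∀ k, T k = Real.log (r k) + T (k + 1) := fun k => by
    simpa [T, add_assoc, add_comm 1] using ((summable_nat_add_iff k).2 hlog).tsum_eq_zero_add
  refine ⟨fun k => c * Real.exp (-T k), fun k => ?_, ?_⟩
  · dsimp only
    rw [hT k, neg_add, Real.exp_add, Real.exp_neg (Real.log _), Real.exp_log (hr k)]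
    field_simp [(hr k).ne']
  · have hT0 : Tendsto T atTop (𝓝 0) := tendsto_sum_nat_add fun j => Real.log (r j)
    simpa using ((Real.continuous_exp.tendsto _).comp hT0.neg).const_mul c

theorem summable_log_one_add_div_one_sub {ι : Type*} {p : ι → ℝ} (hp : ∀ i, |p i| < 1)
    (hsum : Summable p) : Summable fun i => Real.log ((1 + p i) / (1 - p i)) := by
  have hlog : ∀ i, Real.log ((1 + p i) / (1 - p i))
      = Real.log (1 + p i) - Real.log (1 + -p i) := fun i => by
    have := abs_lt.1 (hp i)
    rw [Real.log_div (by linarith) (by linarith), ← sub_eq_add_neg]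
  simpa only [hlog] using (Real.summable_log_one_add_of_summable hsum).sub
    (Real.summable_log_one_add_of_summable hsum.neg)

theorem exists_one_sub_mul_succ_eq_tendsto {p : ℕ → ℝ} (hp : ∀ k, |p k| < 1)
    (hsum : Summable p) (c : ℝ) :
    ∃ d : ℕ → ℝ, (∀ k, (1 - p k) * d (k + 1) = (1 + p k) * d k) ∧ Tendsto d atTop (𝓝 c) := by
  have hpos : ∀ k, 0 < 1 - p k ∧ 0 < 1 + p k := fun k => by
    have := abs_lt.1 (hp k); constructor <;> linarith
  obtain ⟨d, hd, hlim⟩ := exists_mul_succ_eq_tendsto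
    (fun k => div_pos (hpos k).2 (hpos k).1) (summable_log_one_add_div_one_sub hp hsum) c
  refine ⟨d, fun k => ?_, hlim⟩
  rw [hd k, ← mul_assoc, mul_div_cancel₀ _ (hpos k).1.ne']

theorem coupled_recurrence_half_add_sub {p d : ℕ → ℝ}
    (hd : ∀ k, (1 - p k) * d (k + 1) = (1 + p k) * d k) (s : ℝ) (k : ℕ) :
    (s + d k) / 2 = (1 - p k) * ((s + d (k + 1)) / 2) + p k * ((s - d k) / 2) ∧
    (s - d k) / 2 = (1 - p k) * ((s - d (k + 1)) / 2) + p k * ((s + d k) / 2) :=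
  ⟨by linear_combination (-(hd k)) / 2, by linear_combination (hd k) / 2⟩

section LevelConstant

variable {m : ℕ}

theorem treeMax_comp_length [NeZero m] (a : ℕ → ℝ) (x : List (Fin m)) :
    treeMax m (fun y => a y.length) x = a (x.length + 1) := by
  simp [treeMax]

theorem treeMin_comp_length [NeZero m] (a : ℕ → ℝ) (x : List (Fin m)) :
    treeMin m (fun y => a y.length) x = a (x.length + 1) := by
  simp [treeMin]

theorem treeAvg_comp_length [NeZero m] (a : ℕ → ℝ) (x : List (Fin m)) :
    treeAvg m (fun y => a y.length) x = a (x.length + 1) := by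
  simp [treeAvg, NeZero.ne]

theorem solED1_comp_length [NeZero m] {p a b : ℕ → ℝ}
    (h : ∀ k, a k = (1 - p k) * a (k + 1) + p k * b k ∧
      b k = (1 - p k) * b (k + 1) + p k * a k) :
    SolED1 m p (fun x => a x.length) (fun x => b x.length) := fun x => by
  rw [treeMax_comp_length, treeMin_comp_length, treeAvg_comp_length, ← add_mul, add_halves,
    one_mul]
  exact h x.length

@[simp]
theorem length_trunc (π : ℕ → Fin m) (n : ℕ) : (trunc π n).length = n := by
  simp [trunc]

theorem boundaryED2_comp_length {a b : ℕ → ℝ} {C₁ C₂ : ℝ} (ha : Tendsto a atTop (𝓝 C₁))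
    (hb : Tendsto b atTop (𝓝 C₂)) :
    BoundaryED2 m (fun _ => C₁) (fun _ => C₂) (fun x => a x.length) (fun x => b x.length) :=
  fun π => by simpa using And.intro ha hb

end LevelConstant

/-- existence of a level-constant solution of the directed system (ED1)
with constant boundary data, when `∑ p_k < ∞`. -/
theorem stmt0 (m : ℕ) (hm : 2 ≤ m) (p : ℕ → ℝ) (hp : ∀ k, p k ∈ Set.Ico (0 : ℝ) 1)
    (hsum : Summable p) (C₁ C₂ : ℝ) :
    ∃ a b : ℕ → ℝ,
      (∀ k, a k = (1 - p k) * a (k + 1) + p k * b k ∧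
            b k = (1 - p k) * b (k + 1) + p k * a k) ∧
      Tendsto a atTop (𝓝 C₁) ∧ Tendsto b atTop (𝓝 C₂) ∧
      SolED1 m p (fun x => a x.length) (fun x => b x.length) ∧
      BoundaryED2 m (fun _ => C₁) (fun _ => C₂)
        (fun x => a x.length) (fun x => b x.length) := by
  have : NeZero m := ⟨by omega⟩
  have hp_abs : ∀ k, |p k| < 1 := fun k => abs_lt.2 ⟨by linarith [(hp k).1], (hp k).2⟩
  obtain ⟨d, hd, hd_lim⟩ := exists_one_sub_mul_succ_eq_tendsto hp_abs hsum (C₁ - C₂)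
  have ha : Tendsto (fun k => (C₁ + C₂ + d k) / 2) atTop (𝓝 C₁) := by
    simpa using (hd_lim.const_add (C₁ + C₂)).div_const 2
  have hb : Tendsto (fun k => (C₁ + C₂ - d k) / 2) atTop (𝓝 C₂) := by
    simpa using (hd_lim.const_sub (C₁ + C₂)).div_const 2
  have hrec := coupled_recurrence_half_add_sub hd (C₁ + C₂)
  exact ⟨_, _, hrec, ha, hb, solED1_comp_length hrec, boundaryED2_comp_length ha hb⟩
end
end

section
/- Let m ≥ 2 and let (p_k)_{k≥0} ⊂ (0,1) be a sequence of positive numbers with ∑_{k=1}^∞ p_k = +∞. Then for any two constants C₁ ≠ C₂ there is no pair u, v : T_m → ℝ solving the directed system (ED1) and satisfying the boundary condition (ED2) with f ≡ C₁ and g ≡ C₂. -/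
open Filter Topology

noncomputable section

/-!
Since `u(x)` is at least the midrange and `v(x)` at least the mean of the successor values,
each of `u`, `v` is, at every vertex, at least `(1 - p_k) · (its value at a suitable successor)
+ p_k · (the other function)`. Following such successors produces a branch along which, if
`u → C₁` and `v → C₂ > C₁`, the values of `u` drop by about `p_k (C₂ - C₁)` at each step,
which is impossible when `∑ p_k = ∞`. The same argument with `u` and `v` swapped excludes
`C₁ > C₂`.
-/

lemma summable_of_mul_le_sub_succ {p β : ℕ → ℝ} {c : ℝ} (hc : 0 < c) (hp : ∀ n, 0 ≤ p n)
    (hβ : BddBelow (Set.range β)) (hstep : ∀ n, c * p n ≤ β n - β (n + 1)) : Summable p := by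
  obtain ⟨b, hb⟩ := hβ
  refine summable_of_sum_range_le (c := (β 0 - b) / c) hp fun M => ?_
  rw [le_div_iff₀ hc, mul_comm, Finset.mul_sum]
  calc ∑ n ∈ Finset.range M, c * p n
      ≤ ∑ n ∈ Finset.range M, (β n - β (n + 1)) := Finset.sum_le_sum fun n _ => hstep n
    _ = β 0 - β M := Finset.sum_range_sub' β M
    _ ≤ β 0 - b := by linarith [hb ⟨M, rfl⟩]

lemma le_of_tendsto_of_le_convexComb {p β a : ℕ → ℝ} {L L' : ℝ} (hp : ∀ n, 0 ≤ p n)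
    (hdiv : ¬ Summable p) (hstep : ∀ n, (1 - p n) * β (n + 1) + p n * a n ≤ β n)
    (hβ : Tendsto β atTop (𝓝 L)) (ha : Tendsto a atTop (𝓝 L')) : L' ≤ L := by
  by_contra! hlt
  have hgap : Tendsto (fun n => a n - β (n + 1)) atTop (𝓝 (L' - L)) :=
    ha.sub (hβ.comp (tendsto_add_atTop_nat 1))
  obtain ⟨N, hN⟩ := eventually_atTop.1 <|
    hgap.eventually (eventually_gt_nhds (half_lt_self (sub_pos.2 hlt)))
  refine hdiv <| (summable_nat_add_iff N).1 <|
    summable_of_mul_le_sub_succ (half_pos (sub_pos.2 hlt)) (fun n => hp _)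
      (hβ.comp (tendsto_add_atTop_nat N)).bddBelow_range fun n => ?_
  have hgapN := hN (n + N) (Nat.le_add_left N n)
  have hstepN := hstep (n + N)
  rw [Nat.add_right_comm] at hgapN hstepN
  show _ ≤ β (n + N) - β (n + 1 + N)
  nlinarith [hp (n + N)]

@[simp]
lemma trunc_length {m : ℕ} (π : ℕ → Fin m) (n : ℕ) : (trunc π n).length = n := by
  simp [trunc]

lemma trunc_succ {m : ℕ} (π : ℕ → Fin m) (n : ℕ) :
    trunc π (n + 1) = trunc π n ++ [π n] := by
  rw [trunc, List.ofFn_succ']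
  simp [trunc, List.concat_eq_append]

lemma exists_branch_forall_trunc {m : ℕ} {P : List (Fin m) → Fin m → Prop}
    (h : ∀ x, ∃ i, P x i) : ∃ π : ℕ → Fin m, ∀ n, P (trunc π n) (π n) := by
  choose F hF using h
  let X : ℕ → List (Fin m) := fun n => Nat.rec [] (fun _ x => x ++ [F x]) n
  have htrunc : ∀ n, trunc (fun k => F (X k)) n = X n := by
    intro n
    induction n with
    | zero => simp [trunc, X]
    | succ n ih => rw [trunc_succ, ih]
  exact ⟨fun n => F (X n), fun n => htrunc n ▸ hF (X n)⟩

lemma le_of_forall_branch_tendsto {m : ℕ} {p : ℕ → ℝ} {z t : List (Fin m) → ℝ} {L L' : ℝ}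
    (hp : ∀ n, 0 ≤ p n) (hdiv : ¬ Summable p)
    (hstep : ∀ x : List (Fin m), ∃ i : Fin m,
      (1 - p x.length) * z (x ++ [i]) + p x.length * t x ≤ z x)
    (hz : ∀ π : ℕ → Fin m, Tendsto (fun n => z (trunc π n)) atTop (𝓝 L))
    (ht : ∀ π : ℕ → Fin m, Tendsto (fun n => t (trunc π n)) atTop (𝓝 L')) : L' ≤ L := by
  obtain ⟨π, hπ⟩ := exists_branch_forall_trunc hstep
  refine le_of_tendsto_of_le_convexComb hp hdiv (fun n => ?_) (hz π) (ht π)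
  simpa [trunc_succ] using hπ n

section Successors

variable {m : ℕ} [NeZero m] (u : List (Fin m) → ℝ) (x : List (Fin m))

lemma exists_succ_le_treeMidrange :
    ∃ i : Fin m, u (x ++ [i]) ≤ (1 / 2) * treeMax m u x + (1 / 2) * treeMin m u x := by
  obtain ⟨i, hi⟩ := Finite.exists_min fun i : Fin m => u (x ++ [i])
  have hmin : u (x ++ [i]) ≤ treeMin m u x := le_ciInf hi
  have hmax : u (x ++ [i]) ≤ treeMax m u x :=
    le_ciSup (Finite.bddAbove_range fun j : Fin m => u (x ++ [j])) i
  exact ⟨i, by linarith⟩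

lemma exists_succ_le_treeAvg : ∃ i : Fin m, u (x ++ [i]) ≤ treeAvg m u x := by
  obtain ⟨i, hi⟩ := Finite.exists_min fun i : Fin m => u (x ++ [i])
  refine ⟨i, ?_⟩
  have hm : (0 : ℝ) < m := Nat.cast_pos.2 (Nat.pos_of_ne_zero (NeZero.ne m))
  calc u (x ++ [i]) = 1 / (m : ℝ) * ∑ _j : Fin m, u (x ++ [i]) := by
        rw [Finset.sum_const, Finset.card_univ, Fintype.card_fin, nsmul_eq_mul]
        field_simp
    _ ≤ treeAvg m u x :=
        mul_le_mul_of_nonneg_left (Finset.sum_le_sum fun j _ => hi j) (by positivity)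

end Successors

namespace SolED1

variable {m : ℕ} [NeZero m] {p : ℕ → ℝ} {u v : List (Fin m) → ℝ}

lemma exists_step_fst (hp : ∀ k, p k ≤ 1) (h : SolED1 m p u v) (x : List (Fin m)) :
    ∃ i : Fin m, (1 - p x.length) * u (x ++ [i]) + p x.length * v x ≤ u x := by
  obtain ⟨i, hi⟩ := exists_succ_le_treeMidrange u x
  refine ⟨i, ?_⟩
  rw [(h x).1]
  gcongr
  linarith [hp x.length]

lemma exists_step_snd (hp : ∀ k, p k ≤ 1) (h : SolED1 m p u v) (x : List (Fin m)) :
    ∃ i : Fin m, (1 - p x.length) * v (x ++ [i]) + p x.length * u x ≤ v x := by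
  obtain ⟨i, hi⟩ := exists_succ_le_treeAvg v x
  refine ⟨i, ?_⟩
  rw [(h x).2]
  gcongr
  linarith [hp x.length]

end SolED1

/-- if `∑ p_k = +∞` then the directed system (ED1) with constant boundary
data `C₁ ≠ C₂` has no solution. -/
theorem stmt6 (m : ℕ) (hm : 2 ≤ m) (p : ℕ → ℝ) (hp : ∀ k, p k ∈ Set.Ioo (0 : ℝ) 1)
    (hdiv : ¬ Summable p) (C₁ C₂ : ℝ) (hne : C₁ ≠ C₂) :
    ¬ ∃ u v : List (Fin m) → ℝ,
        SolED1 m p u v ∧ BoundaryED2 m (fun _ => C₁) (fun _ => C₂) u v := by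
  rintro ⟨u, v, hsol, hbd⟩
  have : NeZero m := ⟨by omega⟩
  have hp0 : ∀ k, 0 ≤ p k := fun k => (hp k).1.le
  have hp1 : ∀ k, p k ≤ 1 := fun k => (hp k).2.le
  have hu : ∀ π, Tendsto (fun n => u (trunc π n)) atTop (𝓝 C₁) := fun π => (hbd π).1
  have hv : ∀ π, Tendsto (fun n => v (trunc π n)) atTop (𝓝 C₂) := fun π => (hbd π).2
  exact hne <| le_antisymm
    (le_of_forall_branch_tendsto hp0 hdiv (hsol.exists_step_snd hp1) hv hu)
    (le_of_forall_branch_tendsto hp0 hdiv (hsol.exists_step_fst hp1) hu hv)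
end
end

section
/- Let m ≥ 2, (p_k)_{k≥0} ⊂ [0,1), f, g : [0,1] → ℝ, and η > 0. Let (u₊, v₊) be a subsolution and (u⁺, v⁺) a supersolution of (ED1)–(ED2), and set Q = {x ∈ T_m : max{(u₊−u⁺)(x), (v₊−v⁺)(x)} ≥ η}. If x ∈ Q, then there exists a successor y ∈ S(x) with y ∈ Q. -/
open Filter Topology

noncomputable section

/- Subtracting the supersolution inequalities from the subsolution ones at a vertex `x`, and
bounding the successor terms by the largest gap `M` among the successors of `x`, gives
`gap x ≤ (1 - p) M + p · gap x`. Since `p < 1`, this forces `gap x ≤ M`, so a successor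
realising `M` stays in `Q`. -/

section SuccessorBounds

variable {m : ℕ} {u w : List (Fin m) → ℝ} {x : List (Fin m)} {c : ℝ}

theorem treeMax_le_treeMax_add [NeZero m] (h : ∀ i, u (x ++ [i]) ≤ w (x ++ [i]) + c) :
    treeMax m u x ≤ treeMax m w x + c := by
  rw [treeMax, treeMax, ciSup_add (Finite.bddAbove_range _)]
  exact ciSup_mono (Finite.bddAbove_range _) h

theorem treeMin_le_treeMin_add [NeZero m] (h : ∀ i, u (x ++ [i]) ≤ w (x ++ [i]) + c) :
    treeMin m u x ≤ treeMin m w x + c := by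
  rw [treeMin, treeMin, ciInf_add (Finite.bddBelow_range _)]
  exact ciInf_mono (Finite.bddBelow_range _) h

theorem treeAvg_le_treeAvg_add [NeZero m] (h : ∀ i, u (x ++ [i]) ≤ w (x ++ [i]) + c) :
    treeAvg m u x ≤ treeAvg m w x + c := by
  have hsum : ∑ i : Fin m, u (x ++ [i]) ≤ ∑ i : Fin m, w (x ++ [i]) + m * c := by
    simpa [Finset.sum_add_distrib] using Finset.sum_le_sum fun i (_ : i ∈ Finset.univ) => h i
  have hm : (0 : ℝ) < m := by exact_mod_cast Nat.pos_of_neZero m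
  rw [treeAvg, treeAvg, one_div, ← div_eq_inv_mul, ← div_eq_inv_mul, div_add' _ _ _ hm.ne']
  gcongr
  linarith

end SuccessorBounds

def pairGap {m : ℕ} (z w z' w' : List (Fin m) → ℝ) (x : List (Fin m)) : ℝ :=
  max (z x - z' x) (w x - w' x)

theorem pairGap_le_of_forall_successor_le {m : ℕ} [NeZero m] {p : ℕ → ℝ} {f g : ℝ → ℝ}
    {usub vsub usup vsup : List (Fin m) → ℝ} (hsub : SubsolED1 m p f g usub vsub)
    (hsup : SupersolED1 m p f g usup vsup) {x : List (Fin m)} (hp : p x.length ∈ Set.Ico 0 1)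
    {c : ℝ} (hc : ∀ i, pairGap usub vsub usup vsup (x ++ [i]) ≤ c) :
    pairGap usub vsub usup vsup x ≤ c := by
  obtain ⟨hp0, hp1⟩ := hp
  set q := p x.length
  have hu : ∀ i, usub (x ++ [i]) ≤ usup (x ++ [i]) + c := fun i => by
    linarith [(le_max_left _ _).trans (hc i)]
  have hv : ∀ i, vsub (x ++ [i]) ≤ vsup (x ++ [i]) + c := fun i => by
    linarith [(le_max_right _ _).trans (hc i)]
  have hMax := treeMax_le_treeMax_add hu
  have hMin := treeMin_le_treeMin_add hu
  have hAvg := treeAvg_le_treeAvg_add hv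
  obtain ⟨husub, hvsub⟩ := hsub.1 x
  obtain ⟨husup, hvsup⟩ := hsup.1 x
  have hq : 0 < 1 - q := by linarith
  have hu_gap : usub x - usup x ≤ (1 - q) * c + q * (vsub x - vsup x) := by nlinarith
  have hv_gap : vsub x - vsup x ≤ (1 - q) * c + q * (usub x - usup x) := by nlinarith
  set a := pairGap usub vsub usup vsup x
  have hconvex : a ≤ (1 - q) * c + q * a :=
    max_le (hu_gap.trans (by gcongr; exact le_max_right _ _))
      (hv_gap.trans (by gcongr; exact le_max_left _ _))
  exact le_of_mul_le_mul_left (by linarith) hq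

theorem stmt7_general (m : ℕ) (hm : 2 ≤ m) (p : ℕ → ℝ) (hp : ∀ k, p k ∈ Set.Ico (0 : ℝ) 1)
    (f g : ℝ → ℝ) (η : ℝ)
    (usub vsub usup vsup : List (Fin m) → ℝ)
    (hsub : SubsolED1 m p f g usub vsub)
    (hsup : SupersolED1 m p f g usup vsup)
    (x : List (Fin m))
    (hx : η ≤ max (usub x - usup x) (vsub x - vsup x)) :
    ∃ i : Fin m,
      η ≤ max (usub (x ++ [i]) - usup (x ++ [i])) (vsub (x ++ [i]) - vsup (x ++ [i])) := by
  have : NeZero m := ⟨by omega⟩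
  obtain ⟨i, hi⟩ := Finite.exists_max fun i => pairGap usub vsub usup vsup (x ++ [i])
  exact ⟨i, hx.trans (pairGap_le_of_forall_successor_le hsub hsup (hp _) hi)⟩

/-- if `x ∈ Q = {max{(u₊−u⁺), (v₊−v⁺)} ≥ η}` then some successor of `x`
belongs to `Q`. -/
theorem stmt7 (m : ℕ) (hm : 2 ≤ m) (p : ℕ → ℝ) (hp : ∀ k, p k ∈ Set.Ico (0 : ℝ) 1)
    (f g : ℝ → ℝ) (η : ℝ) (hη : 0 < η)
    (usub vsub usup vsup : List (Fin m) → ℝ)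
    (hsub : SubsolED1 m p f g usub vsub)
    (hsup : SupersolED1 m p f g usup vsup)
    (x : List (Fin m))
    (hx : η ≤ max (usub x - usup x) (vsub x - vsup x)) :
    ∃ i : Fin m,
      η ≤ max (usub (x ++ [i]) - usup (x ++ [i])) (vsub (x ++ [i]) - vsup (x ++ [i])) :=
  stmt7_general m hm p hp f g η usub vsub usup vsup hsub hsup x hx
end
end

section
/- Let m ≥ 2, let F, G be averaging operators, let (p_k), (q_k) ⊂ [0,1) and (β^u_k), (β^v_k) ⊂ [0,c] with c < 1 and β^u_0 = β^v_0 = 0, and let f, g : [0,1] → ℝ. Let (u̲, v̲) be a subsolution and (ū, v̄) a supersolution of (ED3)–(ED4), let η > 0, and suppose the set Q = {x ∈ T_m : max{(u̲−ū)(x), (v̲−v̄)(x)} ≥ η} is nonempty. Let x₀ ∈ Q be an element of Q of minimal level. Then there exists an infinite sequence x₀, x₁, x₂, … with x_{j+1} ∈ S(x_j) and x_j ∈ Q for all j ≥ 0. -/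
/-!
Write `M(x)` for the larger of the two gaps `(u̲ - ū)(x)` and `(v̲ - v̄)(x)`. Subtracting the
super- from the subsolution inequality in the equation whose gap realises `M(x)` bounds `M(x)` by
a convex combination of the gap of `F` (or `G`) on the successors, the gap at the predecessor and
the other gap at `x`. If the predecessor satisfies `M(x̂) ≤ M(x)`, the last two terms are at most
`M(x)`, so the operator gap is at least `M(x)`; monotonicity and translation invariance of an
averaging operator then give a successor `y` with `M(y) ≥ M(x)`, and `y` again satisfies
`M(ŷ) ≤ M(y)`. At a node `x₀` of `Q` of minimal level, `x̂₀ ∉ Q` (or `x₀` is the root), so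
`M(x̂₀) < η ≤ M(x₀)` and the successors can be chosen forever.
-/

open Filter Topology

noncomputable section

/-- `F : ℝ^m → ℝ` is an averaging operator. -/
structure IsAveraging (m : ℕ) (F : (Fin m → ℝ) → ℝ) : Prop where
  continuous : Continuous F
  map_zero : F (fun _ => 0) = 0
  map_one : F (fun _ => 1) = 1
  homog : ∀ (t : ℝ) (x : Fin m → ℝ), F (fun i => t * x i) = t * F x
  translate : ∀ (t : ℝ) (x : Fin m → ℝ), F (fun i => t + x i) = t + F x
  lt_max : ∀ x : Fin m → ℝ, (∃ i j, x i ≠ x j) → F x < ⨆ i, x i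
  mono : ∀ x y : Fin m → ℝ, (∀ i, x i ≤ y i) → F x ≤ F y
  perm_invariant : ∀ (σ : Equiv.Perm (Fin m)) (x : Fin m → ℝ), F (x ∘ σ) = F x

/-- The pair `(u, v)` solves the general system (ED3). -/
def SolED3 (m : ℕ) (F G : (Fin m → ℝ) → ℝ) (p q βu βv : ℕ → ℝ)
    (u v : List (Fin m) → ℝ) : Prop :=
  ∀ x : List (Fin m),
    u x = (1 - p x.length) * ((1 - βu x.length) * F (fun i => u (x ++ [i]))
            + βu x.length * u x.dropLast) + p x.length * v x ∧
    v x = (1 - q x.length) * ((1 - βv x.length) * G (fun i => v (x ++ [i]))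
            + βv x.length * v x.dropLast) + q x.length * u x

/-- The pair `(u, v)` satisfies the boundary condition (ED4). -/
def BoundaryED4 (m : ℕ) (f g : ℝ → ℝ) (u v : List (Fin m) → ℝ) : Prop :=
  ∀ π : ℕ → Fin m,
    Tendsto (fun n => u (trunc π n)) atTop (𝓝 (f (psi m π))) ∧
    Tendsto (fun n => v (trunc π n)) atTop (𝓝 (g (psi m π)))

/-- `(z, w)` is a subsolution of (ED3)–(ED4). -/
def SubsolED3 (m : ℕ) (F G : (Fin m → ℝ) → ℝ) (p q βu βv : ℕ → ℝ)
    (f g : ℝ → ℝ) (z w : List (Fin m) → ℝ) : Prop :=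
  (∀ x : List (Fin m),
    z x ≤ (1 - p x.length) * ((1 - βu x.length) * F (fun i => z (x ++ [i]))
            + βu x.length * z x.dropLast) + p x.length * w x ∧
    w x ≤ (1 - q x.length) * ((1 - βv x.length) * G (fun i => w (x ++ [i]))
            + βv x.length * w x.dropLast) + q x.length * z x) ∧
  ∀ π : ℕ → Fin m,
    limsup (fun n => z (trunc π n)) atTop ≤ f (psi m π) ∧
    limsup (fun n => w (trunc π n)) atTop ≤ g (psi m π)

/-- `(z, w)` is a supersolution of (ED3)–(ED4). -/
def SupersolED3 (m : ℕ) (F G : (Fin m → ℝ) → ℝ) (p q βu βv : ℕ → ℝ)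
    (f g : ℝ → ℝ) (z w : List (Fin m) → ℝ) : Prop :=
  (∀ x : List (Fin m),
    z x ≥ (1 - p x.length) * ((1 - βu x.length) * F (fun i => z (x ++ [i]))
            + βu x.length * z x.dropLast) + p x.length * w x ∧
    w x ≥ (1 - q x.length) * ((1 - βv x.length) * G (fun i => w (x ++ [i]))
            + βv x.length * w x.dropLast) + q x.length * z x) ∧
  ∀ π : ℕ → Fin m,
    f (psi m π) ≤ liminf (fun n => z (trunc π n)) atTop ∧
    g (psi m π) ≤ liminf (fun n => w (trunc π n)) atTop

/-- The coefficient conditions (C). -/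
def CoeffCond (p q βu βv : ℕ → ℝ) : Prop :=
  Summable p ∧ Summable q ∧
  Summable (fun k => ∏ j ∈ Finset.Icc 1 k, βu j / (1 - βu j)) ∧
  Summable (fun k => ∏ j ∈ Finset.Icc 1 k, βv j / (1 - βv j))

open Set

theorem IsAveraging.exists_sub_le_sub {m : ℕ} [NeZero m] {F : (Fin m → ℝ) → ℝ}
    (hF : IsAveraging m F) (x y : Fin m → ℝ) : ∃ i, F x - F y ≤ x i - y i := by
  obtain ⟨i, hi⟩ := Finite.exists_max fun i => x i - y i
  refine ⟨i, ?_⟩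
  have h := hF.mono x (fun j => (x i - y i) + y j) fun j => by linarith [hi j]
  rw [hF.translate] at h
  linarith

theorem le_of_le_mix_of_le_of_le {p β a b d M : ℝ} (hp : p ∈ Ico 0 1) (hβ : β ∈ Ico 0 1)
    (hM : M ≤ (1 - p) * ((1 - β) * d + β * a) + p * b) (ha : a ≤ M) (hb : b ≤ M) :
    M ≤ d := by
  obtain ⟨hp0, hp1⟩ := hp
  obtain ⟨hβ0, hβ1⟩ := hβ
  have hpos : 0 < (1 - p) * (1 - β) := mul_pos (by linarith) (by linarith)
  have hcomb : (1 - p) * (1 - β) * M ≤ (1 - p) * (1 - β) * d := by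
    nlinarith [mul_le_mul_of_nonneg_left ha (mul_nonneg (by linarith : (0 : ℝ) ≤ 1 - p) hβ0),
      mul_le_mul_of_nonneg_left hb hp0]
  exact le_of_mul_le_mul_left hcomb hpos

theorem exists_succ_sub_ge {m : ℕ} [NeZero m] {F : (Fin m → ℝ) → ℝ} (hF : IsAveraging m F)
    {p β : ℝ} (hp : p ∈ Ico 0 1) (hβ : β ∈ Ico 0 1) {u₁ u₂ v₁ v₂ : List (Fin m) → ℝ}
    {x : List (Fin m)}
    (h₁ : u₁ x ≤ (1 - p) * ((1 - β) * F (fun i => u₁ (x ++ [i])) + β * u₁ x.dropLast)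
      + p * v₁ x)
    (h₂ : (1 - p) * ((1 - β) * F (fun i => u₂ (x ++ [i])) + β * u₂ x.dropLast)
      + p * v₂ x ≤ u₂ x)
    (hpred : u₁ x.dropLast - u₂ x.dropLast ≤ u₁ x - u₂ x)
    (hcoupled : v₁ x - v₂ x ≤ u₁ x - u₂ x) :
    ∃ i, u₁ x - u₂ x ≤ u₁ (x ++ [i]) - u₂ (x ++ [i]) := by
  obtain ⟨i, hi⟩ := hF.exists_sub_le_sub (fun i => u₁ (x ++ [i])) (fun i => u₂ (x ++ [i]))
  refine ⟨i, le_trans (le_of_le_mix_of_le_of_le hp hβ ?_ hpred hcoupled) hi⟩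
  linear_combination h₁ + h₂

section MaxGap

variable {m : ℕ} {F G : (Fin m → ℝ) → ℝ} {p q βu βv : ℕ → ℝ} {f g : ℝ → ℝ}
  {usub vsub usup vsup : List (Fin m) → ℝ}

def maxGap (usub vsub usup vsup : List (Fin m) → ℝ) (x : List (Fin m)) : ℝ :=
  max (usub x - usup x) (vsub x - vsup x)

theorem SubsolED3.exists_succ_maxGap_ge [NeZero m] (hF : IsAveraging m F)
    (hG : IsAveraging m G) (hp : ∀ k, p k ∈ Ico 0 1) (hq : ∀ k, q k ∈ Ico 0 1)
    (hβu : ∀ k, βu k ∈ Ico 0 1) (hβv : ∀ k, βv k ∈ Ico 0 1)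
    (hsub : SubsolED3 m F G p q βu βv f g usub vsub)
    (hsup : SupersolED3 m F G p q βu βv f g usup vsup) {x : List (Fin m)}
    (hpred : maxGap usub vsub usup vsup x.dropLast ≤ maxGap usub vsub usup vsup x) :
    ∃ i, maxGap usub vsub usup vsup x ≤ maxGap usub vsub usup vsup (x ++ [i]) := by
  unfold maxGap at hpred ⊢
  rcases le_total (vsub x - vsup x) (usub x - usup x) with hu | hv
  · obtain ⟨i, hi⟩ := exists_succ_sub_ge hF (hp _) (hβu _) (hsub.1 x).1 (hsup.1 x).1
      ((le_max_left _ _).trans (hpred.trans_eq (max_eq_left hu))) hu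
    exact ⟨i, (max_eq_left hu).trans_le (hi.trans (le_max_left _ _))⟩
  · obtain ⟨i, hi⟩ := exists_succ_sub_ge hG (hq _) (hβv _) (hsub.1 x).2 (hsup.1 x).2
      ((le_max_right _ _).trans (hpred.trans_eq (max_eq_right hv))) hv
    exact ⟨i, (max_eq_right hv).trans_le (hi.trans (le_max_right _ _))⟩

end MaxGap

theorem exists_seq_of_forall_exists {α : Type*} {R : α → α → Prop} {P : α → Prop} {x₀ : α}
    (h₀ : P x₀) (hstep : ∀ x, P x → ∃ y, R x y ∧ P y) :
    ∃ seq : ℕ → α, seq 0 = x₀ ∧ ∀ j, R (seq j) (seq (j + 1)) ∧ P (seq j) := by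
  choose! next hnext using hstep
  have hP : ∀ j, P (next^[j] x₀) := fun j => by
    induction j with
    | zero => exact h₀
    | succ j ih => rw [Function.iterate_succ_apply']; exact (hnext _ ih).2
  refine ⟨fun j => next^[j] x₀, rfl, fun j => ⟨?_, hP j⟩⟩
  simpa only [Function.iterate_succ_apply'] using (hnext _ (hP j)).1

theorem stmt15_general (m : ℕ) (hm : 2 ≤ m)
    (F G : (Fin m → ℝ) → ℝ) (hF : IsAveraging m F) (hG : IsAveraging m G)
    (p q βu βv : ℕ → ℝ)
    (hp : ∀ k, p k ∈ Set.Ico (0 : ℝ) 1) (hq : ∀ k, q k ∈ Set.Ico (0 : ℝ) 1)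
    (c : ℝ) (hc : c < 1)
    (hβu : ∀ k, βu k ∈ Set.Icc (0 : ℝ) c) (hβv : ∀ k, βv k ∈ Set.Icc (0 : ℝ) c)
    (f g : ℝ → ℝ) (usub vsub usup vsup : List (Fin m) → ℝ)
    (hsub : SubsolED3 m F G p q βu βv f g usub vsub)
    (hsup : SupersolED3 m F G p q βu βv f g usup vsup)
    (η : ℝ)
    (x₀ : List (Fin m))
    (hx₀ : η ≤ max (usub x₀ - usup x₀) (vsub x₀ - vsup x₀))
    (hmin : ∀ y : List (Fin m),
      η ≤ max (usub y - usup y) (vsub y - vsup y) → x₀.length ≤ y.length) :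
    ∃ seq : ℕ → List (Fin m), seq 0 = x₀ ∧
      ∀ j : ℕ, (∃ i : Fin m, seq (j + 1) = seq j ++ [i]) ∧
        η ≤ max (usub (seq j) - usup (seq j)) (vsub (seq j) - vsup (seq j)) := by
  have : NeZero m := ⟨by omega⟩
  set M := maxGap usub vsub usup vsup
  have hβ {β : ℕ → ℝ} (h : ∀ k, β k ∈ Icc 0 c) k : β k ∈ Ico 0 1 :=
    ⟨(h k).1, (h k).2.trans_lt hc⟩
  have hpred₀ : M x₀.dropLast ≤ M x₀ := by
    by_cases hroot : x₀ = []
    · rw [hroot, List.dropLast_nil]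
    · refine (lt_of_not_ge fun hQ => ?_).le.trans hx₀
      have hlen := hmin _ hQ
      rw [List.length_dropLast] at hlen
      have := List.length_pos_iff.mpr hroot
      omega
  obtain ⟨seq, h0, hseq⟩ := exists_seq_of_forall_exists
    (R := fun x y => ∃ i, y = x ++ [i]) (P := fun x => η ≤ M x ∧ M x.dropLast ≤ M x)
    ⟨hx₀, hpred₀⟩ fun x ⟨hηx, hx⟩ => by
      obtain ⟨i, hi⟩ := hsub.exists_succ_maxGap_ge hF hG hp hq (hβ hβu) (hβ hβv) hsup hx
      exact ⟨x ++ [i], ⟨i, rfl⟩, hηx.trans hi, by rwa [List.dropLast_concat]⟩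
  exact ⟨seq, h0, fun j => ⟨(hseq j).1, (hseq j).2.1⟩⟩

/-- starting from an element of minimal level of the set
`Q = {x : max{(u̲−ū)(x), (v̲−v̄)(x)} ≥ η}`, there is an infinite chain of successors
staying in `Q`. -/
theorem stmt15 (m : ℕ) (hm : 2 ≤ m)
    (F G : (Fin m → ℝ) → ℝ) (hF : IsAveraging m F) (hG : IsAveraging m G)
    (p q βu βv : ℕ → ℝ)
    (hp : ∀ k, p k ∈ Set.Ico (0 : ℝ) 1) (hq : ∀ k, q k ∈ Set.Ico (0 : ℝ) 1)
    (c : ℝ) (hc : c < 1)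
    (hβu : ∀ k, βu k ∈ Set.Icc (0 : ℝ) c) (hβv : ∀ k, βv k ∈ Set.Icc (0 : ℝ) c)
    (hβu0 : βu 0 = 0) (hβv0 : βv 0 = 0)
    (f g : ℝ → ℝ) (usub vsub usup vsup : List (Fin m) → ℝ)
    (hsub : SubsolED3 m F G p q βu βv f g usub vsub)
    (hsup : SupersolED3 m F G p q βu βv f g usup vsup)
    (η : ℝ) (hη : 0 < η)
    (x₀ : List (Fin m))
    (hx₀ : η ≤ max (usub x₀ - usup x₀) (vsub x₀ - vsup x₀))
    (hmin : ∀ y : List (Fin m),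
      η ≤ max (usub y - usup y) (vsub y - vsup y) → x₀.length ≤ y.length) :
    ∃ seq : ℕ → List (Fin m), seq 0 = x₀ ∧
      ∀ j : ℕ, (∃ i : Fin m, seq (j + 1) = seq j ++ [i]) ∧
        η ≤ max (usub (seq j) - usup (seq j)) (vsub (seq j) - vsup (seq j)) :=
  stmt15_general m hm F G hF hG p q βu βv hp hq c hc hβu hβv f g usub vsub usup vsup hsub hsup η x₀
    hx₀ hmin
end
end
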